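/- (Groves mechanisms are dominant-strategy incentive compatible.) Let N be a finite player set and Ω a finite trade set. Let V denote the type of valuation profiles v : N → (Finset Ω → ℝ). Suppose Ψ* : V → Finset Ω satisfies, for every profile v, ∑_{i∈N} v_i(Ψ*(v)) = max_{Ψ⊆Ω} ∑_{i∈N} v_i(Ψ), and suppose h : N → V → ℝ satisfies h_i(v) = h_i(w) whenever v_j = w_j for all j ≠ i. Define the payment from player i to the mechanism by p_i(v) = h_i(v) − ∑_{j∈N, j≠i} v_j(Ψ*(v)). Then for every player i ∈ N, every true valuation v_i : Finset Ω → ℝ, and every reported profile v' : N → (Finset Ω → ℝ), letting v* be the profile that agrees with v' on N \ {i} and reports v_i truthfully at i, one has v_i(Ψ*(v*)) − p_i(v*) ≥ v_i(Ψ*(v')) − p_i(v'). -/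

import Mathlib

/-!
Fix the other players' reports `v'_{-i}` and let `v*` be the profile in which `i` reports
`vi` truthfully. Whatever `i` reports, the term `h_i` is the same constant and the payment
rebates the others' reported welfare, so `i`'s utility is the true social welfare
`∑_j v*_j` at the chosen allocation minus that constant. The efficient rule maximises this
welfare exactly when `i` reports truthfully.
-/

open Finset Function

theorem sum_update_apply {N α M : Type*} [Fintype N] [DecidableEq N] [AddCommMonoid M]
    (w : N → α → M) (i : N) (a : α → M) (x : α) :
    ∑ j, update w i a j x = a x + ∑ j ∈ univ.erase i, w j x := by
  rw [← add_sum_erase _ _ (mem_univ i), update_self]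
  congr 1
  exact sum_congr rfl fun j hj => by rw [update_of_ne (ne_of_mem_erase hj)]

theorem groves_utility_eq {N Ω : Type*} [Fintype N] [DecidableEq N]
    (Ψstar : (N → Finset Ω → ℝ) → Finset Ω) (h p : N → (N → Finset Ω → ℝ) → ℝ)
    (hh : ∀ (i : N) (v w : N → Finset Ω → ℝ),
      (∀ j : N, j ≠ i → v j = w j) → h i v = h i w)
    (hp : ∀ (i : N) (v : N → Finset Ω → ℝ),
      p i v = h i v - ∑ j ∈ univ.erase i, v j (Ψstar v))
    (i : N) (vi : Finset Ω → ℝ) (v' w : N → Finset Ω → ℝ) (hw : ∀ j, j ≠ i → w j = v' j) :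
    vi (Ψstar w) - p i w = ∑ j, update v' i vi j (Ψstar w) - h i v' := by
  have hothers : ∑ j ∈ univ.erase i, w j (Ψstar w) = ∑ j ∈ univ.erase i, v' j (Ψstar w) :=
    sum_congr rfl fun j hj => by rw [hw j (ne_of_mem_erase hj)]
  rw [hp, hh i w v' hw, hothers, sum_update_apply]
  ring

/-- Groves mechanisms are dominant-strategy incentive compatible: with an
efficient allocation rule `Ψstar` and payments `p i v = h i v − ∑_{j ≠ i} v j (Ψstar v)`
where `h i` depends only on the reports of players other than `i`, reporting
truthfully maximizes player `i`'s utility regardless of the other reports. -/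
theorem groves_mechanism_DSIC
    {N Ω : Type*} [Fintype N] [Fintype Ω] [DecidableEq N]
    (Ψstar : (N → Finset Ω → ℝ) → Finset Ω)
    (hΨ : ∀ v : N → Finset Ω → ℝ,
      ∑ i : N, v i (Ψstar v)
        = (Finset.univ : Finset (Finset Ω)).sup' Finset.univ_nonempty
            (fun Ψ => ∑ i : N, v i Ψ))
    (h : N → (N → Finset Ω → ℝ) → ℝ)
    (hh : ∀ (i : N) (v w : N → Finset Ω → ℝ),
      (∀ j : N, j ≠ i → v j = w j) → h i v = h i w)
    (p : N → (N → Finset Ω → ℝ) → ℝ)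
    (hp : ∀ (i : N) (v : N → Finset Ω → ℝ),
      p i v = h i v - ∑ j ∈ Finset.univ.erase i, v j (Ψstar v))
    (i : N) (vi : Finset Ω → ℝ) (v' : N → Finset Ω → ℝ) :
    vi (Ψstar (Function.update v' i vi)) - p i (Function.update v' i vi)
      ≥ vi (Ψstar v') - p i v' := by
  set vstar := update v' i vi
  have hefficient : ∑ j, vstar j (Ψstar v') ≤ ∑ j, vstar j (Ψstar vstar) :=
    hΨ vstar ▸ le_sup' (fun Ψ => ∑ j, vstar j Ψ) (mem_univ (Ψstar v'))
  rw [ge_iff_le, groves_utility_eq Ψstar h p hh hp i vi v' v' fun _ _ => rfl,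
    groves_utility_eq Ψstar h p hh hp i vi v' vstar fun j hj => update_of_ne hj vi v']
  linarith
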